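/- For each fixed t ≥ 1, the function f_t(k) = (f_t)_k(k), where (f_t)_1(n) = n+1 and (f_t)_{i+1}(n) = (f_t)_i^(⌊n^(1/t)⌋)(n), eventually dominates every primitive recursive function. -/
import Mathlib


/-- Floor of the real `t`-th root of `n`. -/
noncomputable def nroot (t n : ℕ) : ℕ := ⌊(n : ℝ) ^ ((t : ℝ)⁻¹)⌋₊

/-- `(f_t)_i`: `(f_t)_1 (n) = n + 1`, `(f_t)_{i+1} (n) = (f_t)_i^(⌊n^(1/t)⌋) (n)`. -/
noncomputable def ft (t : ℕ) : ℕ → ℕ → ℕ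
  | 0, n => n
  | 1, n => n + 1
  | (i + 2), n => (ft t (i + 1))^[nroot t n] n

section aux

variable {t : ℕ}

lemma le_nroot (ht : t ≠ 0) {m n : ℕ} (h : m ^ t ≤ n) : m ≤ nroot t n := by
  unfold nroot
  rw [Nat.le_floor_iff (by positivity)]
  have h1 : ((m : ℝ) ^ t) ^ ((t : ℝ)⁻¹) ≤ (n : ℝ) ^ ((t : ℝ)⁻¹) :=
    Real.rpow_le_rpow (by positivity) (by exact_mod_cast h) (by positivity)
  rwa [Real.pow_rpow_inv_natCast (by positivity) ht] at h1

lemma nroot_mono {m n : ℕ} (h : m ≤ n) : nroot t m ≤ nroot t n :=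
  Nat.floor_le_floor (Real.rpow_le_rpow (by positivity) (by exact_mod_cast h) (by positivity))

lemma nroot_pos (ht : t ≠ 0) {n : ℕ} (h : 1 ≤ n) : 1 ≤ nroot t n :=
  le_nroot ht (by simpa using h)

lemma lt_nroot_succ_pow (ht : t ≠ 0) (n : ℕ) : n < (nroot t n + 1) ^ t := by
  have h0 : (0 : ℝ) ≤ (n : ℝ) ^ ((t : ℝ)⁻¹) := by positivity
  have h1 : ((n : ℝ) ^ ((t : ℝ)⁻¹)) ^ t < ((nroot t n + 1 : ℕ) : ℝ) ^ t := by
    apply pow_lt_pow_left₀ _ h0 ht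
    push_cast
    exact Nat.lt_floor_add_one _
  rw [Real.rpow_inv_natCast_pow (by positivity) ht] at h1
  exact_mod_cast h1

lemma le_iterate {g : ℕ → ℕ} (hg : ∀ x, x ≤ g x) (k n : ℕ) : n ≤ g^[k] n := by
  induction k with
  | zero => simp
  | succ k ih => rw [Function.iterate_succ_apply']; exact ih.trans (hg _)

lemma iterate_count_mono {g : ℕ → ℕ} (hm : Monotone g) (hg : ∀ x, x ≤ g x)
    {a b : ℕ} (h : a ≤ b) (n : ℕ) : g^[a] n ≤ g^[b] n := by
  obtain ⟨c, rfl⟩ := Nat.exists_eq_add_of_le h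
  rw [Function.iterate_add_apply]
  exact hm.iterate a (le_iterate hg c n)

lemma le_ft : ∀ i n, n ≤ ft t i n
  | 0, n => le_rfl
  | 1, n => Nat.le_succ n
  | (i + 2), n => le_iterate (le_ft (i + 1)) _ n

lemma ft_mono : ∀ i, Monotone (ft t i)
  | 0 => monotone_id
  | 1 => fun _ _ h => by simpa [ft] using h
  | (i + 2) => by
      intro a b hab
      show (ft t (i + 1))^[nroot t a] a ≤ (ft t (i + 1))^[nroot t b] b
      calc (ft t (i + 1))^[nroot t a] a ≤ (ft t (i + 1))^[nroot t a] b :=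
            (ft_mono (i + 1)).iterate _ hab
        _ ≤ (ft t (i + 1))^[nroot t b] b :=
            iterate_count_mono (ft_mono (i + 1)) (le_ft (i + 1)) (nroot_mono hab) b

lemma ft_succ_le (ht : t ≠ 0) (i : ℕ) {n : ℕ} (hn : 1 ≤ n) :
    ft t (i + 1) n ≤ ft t (i + 2) n := by
  show _ ≤ (ft t (i + 1))^[nroot t n] n
  have h1 : (ft t (i + 1))^[1] n = ft t (i + 1) n := rfl
  rw [← h1]
  exact iterate_count_mono (ft_mono (i + 1)) (le_ft (i + 1)) (nroot_pos ht hn) n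

lemma ft_mono_left (ht : t ≠ 0) {i j : ℕ} (hi : 1 ≤ i) (hij : i ≤ j) {n : ℕ} (hn : 1 ≤ n) :
    ft t i n ≤ ft t j n := by
  induction j, hij using Nat.le_induction with
  | base => exact le_rfl
  | succ j hj ih =>
      obtain ⟨j', rfl⟩ := Nat.exists_eq_add_of_le (hi.trans hj)
      have e : 1 + j' = j' + 1 := Nat.add_comm 1 j'
      rw [e] at ih ⊢
      exact ih.trans (ft_succ_le ht j' hn)

lemma succ_iterate (k n : ℕ) : (fun m => m + 1)^[k] n = n + k := by
  induction k with
  | zero => simp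
  | succ k ih => rw [Function.iterate_succ_apply', ih]; omega

/-- Claim B: polynomial-in-root growth at each level. -/
lemma ft_pow (ht : t ≠ 0) : ∀ i n, 1 ≤ n → n + nroot t n ^ (i + 1) ≤ ft t (i + 2) n := by
  intro i
  induction i with
  | zero =>
      intro n hn
      show _ ≤ (ft t 1)^[nroot t n] n
      have : ft t 1 = fun m => m + 1 := rfl
      rw [this, succ_iterate, pow_one]
  | succ i ih =>
      intro n hn
      show _ ≤ (ft t (i + 2))^[nroot t n] n
      have key : ∀ k, n + k * nroot t n ^ (i + 1) ≤ (ft t (i + 2))^[k] n := by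
        intro k
        induction k with
        | zero => simp
        | succ k ihk =>
            rw [Function.iterate_succ_apply']
            set v := (ft t (i + 2))^[k] n with hv
            have hnv : n ≤ v := le_iterate (le_ft (i + 2)) k n
            have h1 : v + nroot t v ^ (i + 1) ≤ ft t (i + 2) v := ih v (hn.trans hnv)
            have h2 : nroot t n ^ (i + 1) ≤ nroot t v ^ (i + 1) :=
              Nat.pow_le_pow_left (nroot_mono hnv) _
            calc n + (k + 1) * nroot t n ^ (i + 1)
                = (n + k * nroot t n ^ (i + 1)) + nroot t n ^ (i + 1) := by ring
              _ ≤ v + nroot t v ^ (i + 1) := Nat.add_le_add ihk h2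
              _ ≤ ft t (i + 2) v := h1
      calc n + nroot t n ^ (i + 2) = n + nroot t n * nroot t n ^ (i + 1) := by ring
        _ ≤ (ft t (i + 2))^[nroot t n] n := key (nroot t n)

/-- The fixed level `2t² + 1` eventually dominates `(n+1)^t`. -/
lemma ft_poly (ht : 1 ≤ t) {n : ℕ} (hn : 2 ^ t ≤ n) : (n + 1) ^ t ≤ ft t (2 * t * t + 1) n := by
  have ht0 : t ≠ 0 := by omega
  have hn1 : 1 ≤ n := le_trans (Nat.one_le_two_pow) hn
  have h2 : 2 ≤ nroot t n := le_nroot ht0 hn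
  set r := nroot t n with hr
  have hub : n < (r + 1) ^ t := lt_nroot_succ_pow ht0 n
  have hra : r + 1 ≤ r ^ 2 := by nlinarith
  have h3 : n + 1 ≤ r ^ (2 * t) := by
    calc n + 1 ≤ (r + 1) ^ t := hub
      _ ≤ (r ^ 2) ^ t := Nat.pow_le_pow_left hra t
      _ = r ^ (2 * t) := by rw [← pow_mul]
  have h4 : (n + 1) ^ t ≤ r ^ (2 * t * t) := by
    calc (n + 1) ^ t ≤ (r ^ (2 * t)) ^ t := Nat.pow_le_pow_left h3 t
      _ = r ^ (2 * t * t) := by rw [← pow_mul]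
  obtain ⟨i, hi⟩ : ∃ i, 2 * t * t = i + 1 :=
    ⟨2 * t * t - 1, (Nat.succ_pred_eq_of_pos (by positivity)).symm⟩
  have h5 := ft_pow ht0 i n hn1
  rw [← hi] at h5
  calc (n + 1) ^ t ≤ r ^ (2 * t * t) := h4
    _ ≤ n + r ^ (2 * t * t) := Nat.le_add_left _ _
    _ ≤ ft t (2 * t * t + 1) n := by
        have : i + 2 = 2 * t * t + 1 := by omega
        rwa [this] at h5

lemma ack_iterate (m n : ℕ) : (ack m)^[n + 1] 1 = ack (m + 1) n := by
  induction n with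
  | zero => simp [ack_succ_zero]
  | succ n ih => rw [Function.iterate_succ_apply', ih, ack_succ_succ]

/-- Claim A: one level up turns a pointwise `ack m` bound into `nroot t n` iterations. -/
lemma ft_iter_ack {m j N : ℕ} (hj : ∀ x, N ≤ x → ack m x ≤ ft t (j + 1) x)
    {n : ℕ} (hn : N ≤ n) : (ack m)^[nroot t n] n ≤ ft t (j + 2) n := by
  show _ ≤ (ft t (j + 1))^[nroot t n] n
  have key : ∀ a, (ack m)^[a] n ≤ (ft t (j + 1))^[a] n := by
    intro a
    induction a with
    | zero => simp
    | succ a ih =>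
        rw [Function.iterate_succ_apply', Function.iterate_succ_apply']
        have h1 : N ≤ (ft t (j + 1))^[a] n := hn.trans (le_iterate (le_ft (j + 1)) a n)
        calc ack m ((ack m)^[a] n) ≤ ack m ((ft t (j + 1))^[a] n) := ack_mono_right m ih
          _ ≤ ft t (j + 1) ((ft t (j + 1))^[a] n) := hj _ h1
  exact key _

/-- Main induction: each `ack m` is eventually dominated at a fixed level. -/
lemma ft_dominates_ack (ht : 1 ≤ t) (m : ℕ) :
    ∃ j N, 2 * t * t ≤ j ∧ 1 ≤ N ∧ ∀ n, N ≤ n → ack m n ≤ ft t (j + 1) n := by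
  have ht0 : t ≠ 0 := by omega
  induction m with
  | zero =>
      refine ⟨2 * t * t, 2 ^ t, le_refl _, Nat.one_le_two_pow, fun n hn => ?_⟩
      calc ack 0 n = n + 1 := ack_zero n
        _ ≤ (n + 1) ^ t := Nat.le_self_pow ht0 _
        _ ≤ ft t (2 * t * t + 1) n := ft_poly ht hn
  | succ m ih =>
      obtain ⟨j, N, hJ, hN1, h⟩ := ih
      refine ⟨j + 2, max N (2 ^ t), by omega, le_trans hN1 (le_max_left _ _), fun n hn => ?_⟩
      have hnN : N ≤ n := le_trans (le_max_left _ _) hn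
      have hn2t : 2 ^ t ≤ n := le_trans (le_max_right _ _) hn
      have hn1 : 1 ≤ n := hN1.trans hnN
      have h2 : 2 ≤ nroot t n := le_nroot ht0 hn2t
      set G := ft t (j + 2) with hG
      -- the first application already exceeds (n+1)^t
      have hpoly : (n + 1) ^ t ≤ G n := by
        calc (n + 1) ^ t ≤ ft t (2 * t * t + 1) n := ft_poly ht hn2t
          _ ≤ ft t (j + 2) n := ft_mono_left ht0 (by omega) (by omega) hn1
      set v := G n with hv
      have hnv : n ≤ v := le_ft (j + 2) n
      have hrv : n + 1 ≤ nroot t v := le_nroot ht0 hpoly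
      have hNv : N ≤ v := hnN.trans hnv
      have hv1 : 1 ≤ v := hn1.trans hnv
      -- second application gives at least n+1 iterations of ack m
      have hsecond : ack (m + 1) n ≤ G v := by
        calc ack (m + 1) n = (ack m)^[n + 1] 1 := (ack_iterate m n).symm
          _ ≤ (ack m)^[n + 1] v := (ack_mono_right m).iterate _ hv1
          _ ≤ (ack m)^[nroot t v] v :=
              iterate_count_mono (ack_mono_right m) (fun x => (lt_ack_right m x).le) hrv v
          _ ≤ ft t (j + 2) v := ft_iter_ack h hNv
      -- and two applications fit inside nroot t n many
      calc ack (m + 1) n ≤ G (G n) := hsecond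
        _ = G^[2] n := by rw [Function.iterate_succ_apply', Function.iterate_one]
        _ ≤ G^[nroot t n] n := iterate_count_mono (ft_mono (j + 2)) (le_ft (j + 2)) h2 n
        _ = ft t (j + 3) n := rfl

end aux

theorem stmt10 (t : ℕ) (ht : 1 ≤ t) (p : ℕ → ℕ) (hp : Nat.Primrec p) :
    ∃ M : ℕ, ∀ k, M ≤ k → p k < ft t k k := by
  obtain ⟨m, hm⟩ := exists_lt_ack_of_nat_primrec hp
  obtain ⟨j, N, _, hN1, h⟩ := ft_dominates_ack ht m
  refine ⟨max N (j + 1), fun k hk => ?_⟩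
  have hkN : N ≤ k := le_trans (le_max_left _ _) hk
  have hkj : j + 1 ≤ k := le_trans (le_max_right _ _) hk
  calc p k < ack m k := hm k
    _ ≤ ft t (j + 1) k := h k hkN
    _ ≤ ft t k k := ft_mono_left (by omega) (by omega) hkj (hN1.trans hkN)
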